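/- Let V be a vertex operator algebra and n ∈ ℕ with n > 0. Then O_n(V) ⊆ O_{n−1}(V). -/

import Mathlib

noncomputable section

open scoped BigOperators

/-- The generalized binomial coefficient `C(m, k)` for `m : ℤ`, as a complex number. -/
def cchoose (m : ℤ) (k : ℕ) : ℂ :=
  (∏ i ∈ Finset.range k, ((m : ℂ) - (i : ℂ))) / (k.factorial : ℂ)

/-- A grading-restricted vertex algebra structure on a complex vector space `V`,
presented via the projections `proj n` onto the weight spaces `V_(n)` and the
modes `mode u n = u_n` of the vertex operator `Y(u,x) = ∑ u_n x^{-n-1}`. -/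
structure GRVertexAlgebra (V : Type) [AddCommGroup V] [Module ℂ V] : Type where
  /-- projection onto the weight-`n` subspace `V_(n)` -/
  proj : ℤ → V →ₗ[ℂ] V
  /-- `mode u n v = u_n v` -/
  mode : V → ℤ → V → V
  /-- the vacuum vector `𝟙` -/
  one : V
  mode_add_left : ∀ (u u' : V) (n : ℤ) (v : V),
    mode (u + u') n v = mode u n v + mode u' n v
  mode_smul_left : ∀ (c : ℂ) (u : V) (n : ℤ) (v : V),
    mode (c • u) n v = c • mode u n v
  mode_add_right : ∀ (u : V) (n : ℤ) (v v' : V),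
    mode u n (v + v') = mode u n v + mode u n v'
  mode_smul_right : ∀ (u : V) (n : ℤ) (c : ℂ) (v : V),
    mode u n (c • v) = c • mode u n v
  proj_idem : ∀ (m n : ℤ) (v : V), proj m (proj n v) = if m = n then proj n v else 0
  proj_support_finite : ∀ v : V, (Function.support fun n : ℤ => proj n v).Finite
  proj_sum : ∀ v : V, (∑ᶠ n : ℤ, proj n v) = v
  /-- each weight space is finite dimensional -/
  grading_finite_dim : ∀ n : ℤ, FiniteDimensional ℂ (LinearMap.range (proj n))
  /-- the grading is bounded below -/
  grading_bounded_below : ∃ N : ℤ, ∀ n : ℤ, n < N → proj n = 0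
  /-- lower truncation: `u_n v = 0` for `n` sufficiently large -/
  lower_trunc : ∀ u v : V, ∃ N : ℤ, ∀ n : ℤ, N ≤ n → mode u n v = 0
  /-- the vacuum is homogeneous of weight `0` -/
  one_homogeneous : proj 0 one = one
  /-- identity property `Y(𝟙,x) = 1` -/
  identity_prop : ∀ (n : ℤ) (v : V), mode one n v = if n = -1 then v else 0
  /-- creation property, regular part -/
  creation : ∀ (u : V) (n : ℤ), 0 ≤ n → mode u n one = 0
  /-- creation property, constant term: `lim_{x→0} Y(u,x)𝟙 = u` -/
  creation_limit : ∀ u : V, mode u (-1) one = u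
  /-- the Jacobi identity, in terms of modes -/
  jacobi : ∀ (a b c : V) (l m n : ℤ),
      (∑ᶠ i : ℕ, cchoose m i • mode (mode a (l + i) b) (m + n - i) c)
    = (∑ᶠ i : ℕ, ((-1 : ℂ) ^ (i : ℕ) * cchoose l i) • mode a (m + l - i) (mode b (n + i) c))
      - (∑ᶠ i : ℕ, ((-1 : ℂ) ^ (l + i : ℤ) * cchoose l i) •
          mode b (n + l - i) (mode a (m + i) c))
  /-- `L(0)`-bracket formula, where `L(0) v = ∑ n • proj n v` -/
  L0_bracket : ∀ (a v : V) (n : ℤ),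
      (∑ᶠ m : ℤ, (m : ℂ) • proj m (mode a n v)) - mode a n (∑ᶠ m : ℤ, (m : ℂ) • proj m v)
    = mode (∑ᶠ m : ℤ, (m : ℂ) • proj m a) n v + (-(n : ℂ) - 1) • mode a n v
  /-- `L(-1)`-derivative formula, where `L(-1) u = u_{-2} 𝟙`:
  `Y(L(-1)u, x) = (d/dx) Y(u,x)` -/
  Lneg1_deriv : ∀ (u v : V) (n : ℤ),
      mode (mode u (-2) one) n v = (-(n : ℂ)) • mode u (n - 1) v
  /-- `L(-1)`-bracket formula: `[L(-1), Y(u,x)] = Y(L(-1)u, x)` -/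
  Lneg1_bracket : ∀ (u v : V) (n : ℤ),
      mode (mode u n v) (-2) one - mode u n (mode v (-2) one)
    = mode (mode u (-2) one) n v

namespace GRVertexAlgebra

variable {V : Type} [AddCommGroup V] [Module ℂ V]

/-- The operator `L(0)`. -/
def L0op (VA : GRVertexAlgebra V) (v : V) : V := ∑ᶠ m : ℤ, (m : ℂ) • VA.proj m v

/-- The operator `L(-1)`. -/
def Lneg1op (VA : GRVertexAlgebra V) (v : V) : V := VA.mode v (-2) VA.one

/-- `u` is homogeneous (of some weight). -/
def Homogeneous (VA : GRVertexAlgebra V) (u : V) : Prop := ∃ w : ℤ, VA.proj w u = u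

lemma mode_zero_left (VA : GRVertexAlgebra V) (n : ℤ) (v : V) : VA.mode 0 n v = 0 := by
  simpa using VA.mode_smul_left 0 0 n v

lemma mode_zero_right (VA : GRVertexAlgebra V) (u : V) (n : ℤ) : VA.mode u n 0 = 0 := by
  simpa using VA.mode_smul_right u n 0 0

/-- `Res_x x^N (1+x)^{l + L(0)-weight} Y(u, x) v`, i.e. the residue
`Res_x x^N (1+x)^l Y((1+x)^{L(0)} u, x) v`, expressed in terms of modes and the
homogeneous components of `u`. -/
def resPow (VA : GRVertexAlgebra V) (N l : ℤ) (u v : V) : V :=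
  ∑ᶠ m : ℤ, ∑ᶠ i : ℕ, cchoose (l + m) i • VA.mode (VA.proj m u) (N + i) v

end GRVertexAlgebra

section UInf

variable (V : Type) [AddCommGroup V] [Module ℂ V]

/-- The space of column-finite `ℕ × ℕ` matrices with entries in `V`, as a submodule of
the space of all doubly indexed families. -/
def UInfSub : Submodule ℂ (ℕ → ℕ → V) where
  carrier := {A | ∀ l : ℕ, (Function.support fun k => A k l).Finite}
  add_mem' := by
    intro A B hA hB l
    refine Set.Finite.subset ((hA l).union (hB l)) ?_
    intro k hk
    by_contra h
    simp only [Set.mem_union, Function.mem_support, not_or, not_not] at h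
    exact hk (by simp [Pi.add_apply, h.1, h.2])
  zero_mem' := by
    intro l
    simp [Function.support]
  smul_mem' := by
    intro c A hA l
    refine Set.Finite.subset (hA l) ?_
    intro k hk
    by_contra h
    simp only [Function.mem_support, not_not] at h
    exact hk (by simp [Pi.smul_apply, h])

/-- `U^∞(V)`: column-finite `ℕ × ℕ` matrices with entries in `V`. -/
def UInf : Type := ↥(UInfSub V)

instance : AddCommGroup (UInf V) := by unfold UInf; infer_instance
instance : Module ℂ (UInf V) := by unfold UInf; infer_instance

end UInf

namespace GRVertexAlgebra

variable {V : Type} [AddCommGroup V] [Module ℂ V]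

/-- `[v]_{kl} = v ⊗ E_{kl}`, the matrix with entry `v` in position `(k,l)` and `0` elsewhere. -/
def Usingle (v : V) (k l : ℕ) : UInf V :=
  ⟨fun k' l' => if k' = k ∧ l' = l then v else 0, by
    intro l'
    refine Set.Finite.subset (Set.finite_singleton k) ?_
    intro k' hk'
    simp only [Function.mem_support] at hk'
    by_contra h
    simp only [Set.mem_singleton_iff] at h
    exact hk' (by simp [h])⟩

/-- The `(k,l)` entry of the product `[u]_{kn} ⋄ [v]_{nl}`:
`∑_{m=0}^{n} C(-k+n-l-1, m) Res_x x^{-k+n-l-m-1} (1+x)^l Y((1+x)^{L(0)} u, x) v`. -/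
def diamondEntry (VA : GRVertexAlgebra V) (u v : V) (k n l : ℕ) : V :=
  ∑ m ∈ Finset.range (n + 1),
    cchoose (-(k : ℤ) + n - l - 1) m • VA.resPow (-(k : ℤ) + n - l - m - 1) l u v

lemma resPow_zero_left (VA : GRVertexAlgebra V) (N l : ℤ) (v : V) :
    VA.resPow N l 0 v = 0 := by
  unfold GRVertexAlgebra.resPow
  have h : ∀ m : ℤ, (∑ᶠ i : ℕ, cchoose (l + m) i • VA.mode (VA.proj m (0 : V)) (N + i) v) = 0 := by
    intro m
    have : ∀ i : ℕ, cchoose (l + m) i • VA.mode (VA.proj m (0 : V)) (N + i) v = 0 := by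
      intro i
      rw [map_zero, VA.mode_zero_left]
      simp
    simp only [this]
    exact finsum_zero
  simp only [h]
  exact finsum_zero

lemma resPow_zero_right (VA : GRVertexAlgebra V) (N l : ℤ) (u : V) :
    VA.resPow N l u 0 = 0 := by
  unfold GRVertexAlgebra.resPow
  have h : ∀ m : ℤ, (∑ᶠ i : ℕ, cchoose (l + m) i • VA.mode (VA.proj m u) (N + i) (0 : V)) = 0 := by
    intro m
    have : ∀ i : ℕ, cchoose (l + m) i • VA.mode (VA.proj m u) (N + i) (0 : V) = 0 := by
      intro i
      rw [VA.mode_zero_right]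
      simp
    simp only [this]
    exact finsum_zero
  simp only [h]
  exact finsum_zero

lemma diamondEntry_zero_left (VA : GRVertexAlgebra V) (v : V) (k n l : ℕ) :
    VA.diamondEntry 0 v k n l = 0 := by
  unfold GRVertexAlgebra.diamondEntry
  simp [VA.resPow_zero_left]

lemma diamondEntry_zero_right (VA : GRVertexAlgebra V) (u : V) (k n l : ℕ) :
    VA.diamondEntry u 0 k n l = 0 := by
  unfold GRVertexAlgebra.diamondEntry
  simp [VA.resPow_zero_right]

/-- The product `⋄` on `U^∞(V)`. -/
def udiamond (VA : GRVertexAlgebra V) (A B : UInf V) : UInf V :=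
  ⟨fun k l => ∑ᶠ n : ℕ, VA.diamondEntry (A.1 k n) (B.1 n l) k n l, by
    intro l
    refine Set.Finite.subset
      (Set.Finite.biUnion (B.2 l) (fun n _ => A.2 n)) ?_
    intro k hk
    simp only [Function.mem_support] at hk
    by_contra h
    apply hk
    have hterm : ∀ n : ℕ, VA.diamondEntry (A.1 k n) (B.1 n l) k n l = 0 := by
      intro n
      by_cases hB : B.1 n l = 0
      · rw [hB]; exact VA.diamondEntry_zero_right _ _ _ _
      · have hA : A.1 k n = 0 := by
          by_contra hA
          exact h (Set.mem_biUnion (by exact hB) (by exact hA))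
        rw [hA]; exact VA.diamondEntry_zero_left _ _ _ _
    simp only [hterm]
    exact finsum_zero⟩

end GRVertexAlgebra
/-- A lower-bounded generalized module for a grading-restricted vertex algebra,
presented via the mode action `wmode`, the projections `wproj μ` onto the
(generalized-eigenvalue) weight spaces `W_(μ)`, and the operators `L_W(0)`, `L_W(-1)`. -/
structure LBGModule {V : Type} [AddCommGroup V] [Module ℂ V]
    (VA : GRVertexAlgebra V) (W : Type) [AddCommGroup W] [Module ℂ W] : Type where
  /-- `wmode u n w = u_n w`, the modes of `Y_W(u,x) = ∑ u_n x^{-n-1}` -/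
  wmode : V → ℤ → W → W
  /-- projection onto the weight-`μ` subspace `W_(μ)` -/
  wproj : ℂ → W →ₗ[ℂ] W
  /-- the operator `L_W(0)` -/
  LW0 : W →ₗ[ℂ] W
  /-- the operator `L_W(-1)` -/
  LW1 : W →ₗ[ℂ] W
  wmode_add_left : ∀ (u u' : V) (n : ℤ) (w : W),
    wmode (u + u') n w = wmode u n w + wmode u' n w
  wmode_smul_left : ∀ (c : ℂ) (u : V) (n : ℤ) (w : W),
    wmode (c • u) n w = c • wmode u n w
  wmode_add_right : ∀ (u : V) (n : ℤ) (w w' : W),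
    wmode u n (w + w') = wmode u n w + wmode u n w'
  wmode_smul_right : ∀ (u : V) (n : ℤ) (c : ℂ) (w : W),
    wmode u n (c • w) = c • wmode u n w
  wproj_idem : ∀ (μ ν : ℂ) (w : W), wproj μ (wproj ν w) = if μ = ν then wproj ν w else 0
  wproj_support_finite : ∀ w : W, (Function.support fun μ : ℂ => wproj μ w).Finite
  wproj_sum : ∀ w : W, (∑ᶠ μ : ℂ, wproj μ w) = w
  /-- the grading is bounded below in real part -/
  grading_bounded_below : ∃ B : ℝ, ∀ μ : ℂ, μ.re < B → wproj μ = 0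
  /-- lower truncation -/
  lower_trunc : ∀ (u : V) (w : W), ∃ N : ℤ, ∀ n : ℤ, N ≤ n → wmode u n w = 0
  /-- identity property `Y_W(𝟙,x) = 1` -/
  identity_prop : ∀ (n : ℤ) (w : W), wmode VA.one n w = if n = -1 then w else 0
  /-- the Jacobi identity for the module -/
  jacobi : ∀ (a b : V) (w : W) (l m n : ℤ),
      (∑ᶠ i : ℕ, cchoose m i • wmode (VA.mode a (l + i) b) (m + n - i) w)
    = (∑ᶠ i : ℕ, ((-1 : ℂ) ^ (i : ℕ) * cchoose l i) • wmode a (m + l - i) (wmode b (n + i) w))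
      - (∑ᶠ i : ℕ, ((-1 : ℂ) ^ (l + i : ℤ) * cchoose l i) •
          wmode b (n + l - i) (wmode a (m + i) w))
  /-- `W_(μ)` is the generalized eigenspace of `L_W(0)` with eigenvalue `μ` -/
  gen_eigenspace : ∀ (μ : ℂ) (w : W),
    ∃ k : ℕ, (((LW0 - μ • LinearMap.id : Module.End ℂ W) ^ k) : W →ₗ[ℂ] W) (wproj μ w) = 0
  gen_eigenspace_mem : ∀ (μ : ℂ) (w : W),
    (∃ k : ℕ, (((LW0 - μ • LinearMap.id : Module.End ℂ W) ^ k) : W →ₗ[ℂ] W) w = 0) → wproj μ w = w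
  /-- `L_W(0)`-bracket formula -/
  LW0_bracket : ∀ (a : V) (w : W) (n : ℤ),
      LW0 (wmode a n w) - wmode a n (LW0 w)
    = wmode (∑ᶠ m : ℤ, (m : ℂ) • VA.proj m a) n w + (-(n : ℂ) - 1) • wmode a n w
  /-- `L_W(-1)`-derivative formula: `Y_W(L(-1)u, x) = (d/dx) Y_W(u,x)` -/
  LW1_deriv : ∀ (u : V) (w : W) (n : ℤ),
      wmode (VA.mode u (-2) VA.one) n w = (-(n : ℂ)) • wmode u (n - 1) w
  /-- `L_W(-1)`-bracket formula -/
  LW1_bracket : ∀ (u : V) (w : W) (n : ℤ),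
      LW1 (wmode u n w) - wmode u n (LW1 w) = wmode (VA.mode u (-2) VA.one) n w

namespace LBGModule

variable {V : Type} [AddCommGroup V] [Module ℂ V] {VA : GRVertexAlgebra V}
variable {W : Type} [AddCommGroup W] [Module ℂ W]

lemma wmode_zero_left (M : LBGModule VA W) (n : ℤ) (w : W) : M.wmode 0 n w = 0 := by
  simpa using M.wmode_smul_left 0 0 n w

lemma wmode_zero_right (M : LBGModule VA W) (u : V) (n : ℤ) : M.wmode u n 0 = 0 := by
  simpa using M.wmode_smul_right u n 0 0

/-- `Ω_n(W) = {w ∈ W : v_k w = 0 for homogeneous v with wt v - k - 1 < -n}`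
(for `n < 0` this is automatically `{0}`, matching `Ω_{-1}(W) = 0`). -/
def OmegaSet (M : LBGModule VA W) (n : ℤ) : Set W :=
  {w : W | ∀ (m k : ℤ) (v : V), m - k - 1 < -n → M.wmode (VA.proj m v) k w = 0}

/-- `ϑ_{Gr(W)}([v]_{kl})` applied to a representative `w`:
`Res_x x^{l-k-1} Y_W(x^{L(0)} v, x) w`. -/
def wAct (M : LBGModule VA W) (v : V) (k l : ℕ) (w : W) : W :=
  ∑ᶠ m : ℤ, M.wmode (VA.proj m v) ((l : ℤ) - (k : ℤ) - 1 + m) w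

end LBGModule

namespace GRVertexAlgebra

variable {V : Type} [AddCommGroup V] [Module ℂ V]

/-- Membership in `Q^∞(V)`: `A` acts as zero on `Gr(W)` for every lower-bounded
generalized `V`-module `W`.  Here the action of `A` on `[w]_n ∈ Gr_n(W)` has component
`[ϑ([A_{kn}]_{kn}) w]_k` in `Gr_k(W)`, which vanishes in `Gr_k(W) = Ω_k(W)/Ω_{k-1}(W)`
exactly when the representative lies in `Ω_{k-1}(W)`. -/
def memQ (VA : GRVertexAlgebra V) (A : UInf V) : Prop :=
  ∀ (W : Type) (_ : AddCommGroup W) (_ : Module ℂ W) (M : LBGModule VA W)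
    (n k : ℕ) (w : W), w ∈ M.OmegaSet n →
      M.wAct (A.1 k n) k n w ∈ M.OmegaSet ((k : ℤ) - 1)

/-- The generators of `O^∞_∘(V)` living in position `(k,l)`:
`Res_x x^{-k-l-p-2} (1+x)^l Y((1+x)^{L(0)} u, x) v`. -/
def circExpr (VA : GRVertexAlgebra V) (u v : V) (k l p : ℕ) : V :=
  VA.resPow (-(k : ℤ) - l - p - 2) l u v

/-- Membership in `O^∞_∘(V)`: each entry of `A` is a (finite) linear combination of the
generators `Res_x x^{-k-l-p-2} (1+x)^l [Y((1+x)^{L(0)} u, x) v]_{kl}`; since each generator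
is concentrated in a single position `(k,l)`, an infinite linear combination in which each
pair `(k,l)` appears only finitely many times is exactly a column-finite matrix each of whose
entries lies in the corresponding span. -/
def memOcirc (VA : GRVertexAlgebra V) (A : UInf V) : Prop :=
  ∀ k l : ℕ, A.1 k l ∈ Submodule.span ℂ
    {x : V | ∃ (u v : V) (p : ℕ), x = VA.circExpr u v k l p}

/-- The element `(L(-1) + L(0) + l - k) v`. -/
def LLExpr (VA : GRVertexAlgebra V) (k l : ℕ) (v : V) : V :=
  VA.Lneg1op v + VA.L0op v + (((l : ℂ) - (k : ℂ)) • v)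

/-- Membership in `O^∞(V)`. -/
def memO (VA : GRVertexAlgebra V) (A : UInf V) : Prop :=
  ∀ k l : ℕ, A.1 k l ∈ Submodule.span ℂ
    ({x : V | ∃ (u v : V) (p : ℕ), x = VA.circExpr u v k l p}
      ∪ {x : V | ∃ v : V, x = VA.LLExpr k l v})

end GRVertexAlgebra
namespace GRVertexAlgebra

variable {V : Type} [AddCommGroup V] [Module ℂ V]

/-- Huang's Jacobi-identity element of `U^∞(V)` attached to `u, v ∈ V` with `v`
homogeneous of weight `wtv`, and integers `k ∈ ℕ`, `l, p, n ∈ ℤ` with `l + p ∈ ℕ`: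
`∑_{j, n+p-j ≥ 0} (-1)^j C(p,j) [v]_{k,n+p-j} ⋄ [u]_{n+p-j,l+p}`
`- ∑_{j, l-n+k+p-j ≥ 0} (-1)^{p-j} C(p,j) [u]_{k,l-n+k+p-j} ⋄ [v]_{l-n+k+p-j,l+p}`
`- ∑_{j ∈ ℕ} C(wt v + n - k - 1, j) [v_{p+j} u]_{k,l+p}`. -/
def jElt (VA : GRVertexAlgebra V) (u v : V) (wtv : ℤ) (k : ℕ) (l p n : ℤ) : UInf V :=
  (∑ᶠ j : ℕ, if (j : ℤ) ≤ n + p then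
      ((-1 : ℂ) ^ (j : ℕ) * cchoose p j) •
        VA.udiamond (Usingle v k (n + p - j).toNat)
          (Usingle u (n + p - j).toNat (l + p).toNat)
    else 0)
  - (∑ᶠ j : ℕ, if (j : ℤ) ≤ l - n + (k : ℤ) + p then
      ((-1 : ℂ) ^ ((p : ℤ) - (j : ℤ)) * cchoose p j) •
        VA.udiamond (Usingle u k (l - n + (k : ℤ) + p - j).toNat)
          (Usingle v (l - n + (k : ℤ) + p - j).toNat (l + p).toNat)
    else 0)
  - Usingle (∑ᶠ j : ℕ, cchoose (wtv + n - (k : ℤ) - 1) j • VA.mode v (p + j) u)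
      k (l + p).toNat

/-- The `(k, l+p)` entry of the Jacobi-identity element `jElt`, written out in terms of
residues as in the paper. -/
def jEntry (VA : GRVertexAlgebra V) (u v : V) (wtv : ℤ) (k : ℕ) (l p n : ℤ) : V :=
  (∑ᶠ j : ℕ, if (j : ℤ) ≤ n + p then
      ((-1 : ℂ) ^ (j : ℕ) * cchoose p j) •
        VA.diamondEntry v u k (n + p - j).toNat (l + p).toNat
    else 0)
  - (∑ᶠ j : ℕ, if (j : ℤ) ≤ l - n + (k : ℤ) + p then
      ((-1 : ℂ) ^ ((p : ℤ) - (j : ℤ)) * cchoose p j) •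
        VA.diamondEntry u v k (l - n + (k : ℤ) + p - j).toNat (l + p).toNat
    else 0)
  - (∑ᶠ j : ℕ, cchoose (wtv + n - (k : ℤ) - 1) j • VA.mode v (p + j) u)

/-- The set of generating elements of `J^∞(V)`. -/
def JSet (VA : GRVertexAlgebra V) : Set (UInf V) :=
  {A : UInf V | ∃ (u v : V) (wtv : ℤ) (k : ℕ) (l p n : ℤ),
    VA.proj wtv v = v ∧ 0 ≤ l + p ∧ A = VA.jElt u v wtv k l p n}

/-- The set `O^∞(V)` of Huang, as a subset of `U^∞(V)`. -/
def OSet (VA : GRVertexAlgebra V) : Set (UInf V) := {A : UInf V | VA.memO A}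

end GRVertexAlgebra

/-- A vertex operator algebra: a grading-restricted vertex algebra together with a
conformal vector `ω` whose modes `L(n) = ω_{n+1}` give a representation of the Virasoro
algebra, recover the grading operator `L(0)`, and satisfy the `L(-1)`-property. -/
structure VertexOperatorAlgebra (V : Type) [AddCommGroup V] [Module ℂ V]
    extends GRVertexAlgebra V : Type where
  /-- the conformal vector -/
  omega : V
  /-- the central charge -/
  centralCharge : ℂ
  /-- the Virasoro relations for `L(n) = ω_{n+1}` -/
  virasoro : ∀ (m n : ℤ) (v : V),
      mode omega (m + 1) (mode omega (n + 1) v) - mode omega (n + 1) (mode omega (m + 1) v)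
    = ((m : ℂ) - (n : ℂ)) • mode omega (m + n + 1) v
      + (if m + n = 0 then (((m ^ 3 - m : ℤ) : ℂ) / 12) * centralCharge else 0) • v
  /-- `L(0) = ω_1` is the grading operator -/
  omega_L0 : ∀ v : V, mode omega 1 v = ∑ᶠ m : ℤ, (m : ℂ) • proj m v
  /-- `L(-1) = ω_0` -/
  omega_Lneg1 : ∀ v : V, mode omega 0 v = mode v (-2) one

namespace GRVertexAlgebra

variable {V : Type} [AddCommGroup V] [Module ℂ V]

/-- The circle product `u ∘_n v = Res_x (1+x)^{wt u + n} Y(u,x) v / x^{2n+2}`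
(for `u` homogeneous; `resPow` inserts the weight of each homogeneous component). -/
def circN (VA : GRVertexAlgebra V) (n : ℕ) (u v : V) : V :=
  VA.resPow (-(2 * (n : ℤ)) - 2) n u v

/-- The subspace `O_n(V)`, spanned by the `u ∘_n v` for homogeneous `u` and all `v`, and
by the `(L(-1) + L(0)) v`. -/
def ZhuO (VA : GRVertexAlgebra V) (n : ℕ) : Submodule ℂ V :=
  Submodule.span ℂ
    ({x : V | ∃ u v : V, VA.Homogeneous u ∧ x = VA.circN n u v}
      ∪ {x : V | ∃ v : V, x = VA.Lneg1op v + VA.L0op v})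

/-- The product `u *_n v` of Dong–Li–Mason (for `u` homogeneous, extended linearly):
`∑_{m=0}^{n} (-1)^m C(m+n, n) Res_x (1+x)^{wt u + n} Y(u,x) v / x^{n+m+1}`. -/
def starN (VA : GRVertexAlgebra V) (n : ℕ) (u v : V) : V :=
  ∑ m ∈ Finset.range (n + 1),
    ((-1 : ℂ) ^ (m : ℕ) * ((m + n).choose n : ℂ)) •
      VA.resPow (-(n : ℤ) - m - 1) n u v

end GRVertexAlgebra

/-- The monomial `α(-i_1) ⋯ α(-i_j) 𝟙` of the rank one Heisenberg vertex operator algebra,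
indexed by the multiset `{i_1, …, i_j}` of positive integers; here `a = α(-1)𝟙` so that
`α(m) = a_m`. -/
def heisMono {V : Type} [AddCommGroup V] [Module ℂ V]
    (VA : GRVertexAlgebra V) (a : V) (μ : Multiset ℕ+) : V :=
  (μ.sort (· ≤ ·)).foldr (fun i v => VA.mode a (-(i : ℤ)) v) VA.one

/-- The rank one Heisenberg vertex operator algebra `M(1)`: a vertex operator algebra
with a weight-one element `a = α(-1)𝟙` whose modes `α(m) = a_m` satisfy the rank one
Heisenberg relations (with the central element acting as `1`), such that the monomials
`α(-i_1) ⋯ α(-i_j) 𝟙` form a basis, and with conformal vector `ω = (1/2) α(-1)² 𝟙`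
of central charge `1`. -/
structure HeisenbergVOA (V : Type) [AddCommGroup V] [Module ℂ V]
    extends VertexOperatorAlgebra V : Type where
  /-- the element `a = α(-1)𝟙` -/
  a : V
  /-- `α(-1)𝟙` is homogeneous of weight one -/
  a_wt : proj 1 a = a
  /-- the Heisenberg commutation relations `[α(m), α(n)] = m δ_{m+n,0}` (`c` acts as `1`) -/
  heis_comm : ∀ (m n : ℤ) (v : V),
      mode a m (mode a n v) - mode a n (mode a m v)
    = if m + n = 0 then (m : ℂ) • v else 0
  /-- `M(1) ≃ S(ĥ⁻)` linearly: the monomials `α(-i_1)⋯α(-i_j)𝟙` form a basis -/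
  basis : Module.Basis (Multiset ℕ+) ℂ V
  basis_eq : ∀ μ : Multiset ℕ+, basis μ = heisMono toGRVertexAlgebra a μ
  omega_eq : omega = (1 / 2 : ℂ) • mode a (-1) a
  centralCharge_eq : centralCharge = 1

namespace HeisenbergVOA

variable {V : Type} [AddCommGroup V] [Module ℂ V]

/-- The element
`D_n = [α(-1)𝟙]_{nn} ⋄ [α(-1)𝟙]_{nn} - [α(-1)²𝟙]_{nn} + 2n [𝟙]_{nn}` of `U^∞(M(1))`. -/
def Delt (H : HeisenbergVOA V) (n : ℕ) : UInf V :=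
  H.udiamond (GRVertexAlgebra.Usingle H.a n n) (GRVertexAlgebra.Usingle H.a n n)
    - GRVertexAlgebra.Usingle (H.mode H.a (-1) H.a) n n
    + (2 * (n : ℂ)) • GRVertexAlgebra.Usingle H.one n n

end HeisenbergVOA

namespace LBGModule

variable {V : Type} [AddCommGroup V] [Module ℂ V]
variable {W : Type} [AddCommGroup W] [Module ℂ W]

/-- `Ω(W) = {w ∈ W : α(n) w = 0 for all n > 0}` for a module `W` over the rank one
Heisenberg vertex operator algebra. -/
def smallOmega (H : HeisenbergVOA V) (M : LBGModule H.toGRVertexAlgebra W) :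
    Submodule ℂ W where
  carrier := {w : W | ∀ n : ℤ, 0 < n → M.wmode H.a n w = 0}
  add_mem' := by
    intro w w' hw hw' n hn
    rw [M.wmode_add_right, hw n hn, hw' n hn, add_zero]
  zero_mem' := fun n _ => M.wmode_zero_right H.a n
  smul_mem' := by
    intro c w hw n hn
    rw [M.wmode_smul_right, hw n hn, smul_zero]

end LBGModule
/-! ### Auxiliary lemmas for `ZhuO_antitone` -/

section ZhuOAux

lemma cchoose_zero' (m : ℤ) : cchoose m 0 = 1 := by simp [cchoose]

lemma cchoose_absorb (c : ℤ) (i : ℕ) :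
    ((i:ℂ)+1) * cchoose c (i+1) = ((c:ℂ) - i) * cchoose c i := by
  unfold cchoose
  rw [Finset.prod_range_succ, Nat.factorial_succ]
  have h1 : ((i:ℂ)+1) ≠ 0 := Nat.cast_add_one_ne_zero i
  have h2 : ((i.factorial : ℕ):ℂ) ≠ 0 := Nat.cast_ne_zero.mpr i.factorial_ne_zero
  push_cast
  field_simp

lemma cchoose_pascal (c : ℤ) (i : ℕ) :
    cchoose (c+1) (i+1) = cchoose c (i+1) + cchoose c i := by
  have hA : (∏ j ∈ Finset.range (i+1), (((c:ℂ)+1) - j))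
      = (∏ j ∈ Finset.range i, ((c:ℂ) - j)) * ((c:ℂ)+1) := by
    rw [Finset.prod_range_succ']
    congr 1
    · exact Finset.prod_congr rfl (fun j _ => by push_cast; ring)
    · simp
  have hB : (∏ j ∈ Finset.range (i+1), ((c:ℂ) - j))
      = (∏ j ∈ Finset.range i, ((c:ℂ) - j)) * ((c:ℂ) - i) := Finset.prod_range_succ _ _
  have h1 : ((i:ℂ)+1) ≠ 0 := Nat.cast_add_one_ne_zero i
  have h2 : ((i.factorial : ℕ):ℂ) ≠ 0 := Nat.cast_ne_zero.mpr i.factorial_ne_zero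
  unfold cchoose
  have hc : ∀ j : ℕ, (((c+1 : ℤ)):ℂ) - (j:ℂ) = ((c:ℂ)+1) - j := by intro j; push_cast; ring
  simp only [hc]
  rw [hA, hB, Nat.factorial_succ]
  push_cast
  field_simp
  ring

lemma finsum_eq_sum_range {M : Type*} [AddCommMonoid M] (f : ℕ → M) (K : ℕ)
    (h : ∀ i, K ≤ i → f i = 0) : ∑ᶠ i, f i = ∑ i ∈ Finset.range K, f i := by
  apply finsum_eq_sum_of_support_subset
  intro i hi
  simp only [Function.mem_support] at hi
  simp only [Finset.coe_range, Set.mem_Iio]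
  by_contra hk
  exact hi (h i (le_of_not_gt hk))

variable {V : Type} [AddCommGroup V] [Module ℂ V]

lemma proj_homog_ne (VA : GRVertexAlgebra V) {w : ℤ} {u : V} (h : VA.proj w u = u)
    {m : ℤ} (hm : m ≠ w) : VA.proj m u = 0 := by
  rw [← h, VA.proj_idem, if_neg hm]

lemma resPow_homog (VA : GRVertexAlgebra V) {w : ℤ} {u : V} (h : VA.proj w u = u)
    (N l : ℤ) (v : V) :
    VA.resPow N l u v = ∑ᶠ i : ℕ, cchoose (l + w) i • VA.mode u (N + i) v := by
  unfold GRVertexAlgebra.resPow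
  rw [finsum_eq_single _ w]
  · rw [h]
  · intro m hm
    rw [proj_homog_ne VA h hm]
    simp only [VA.mode_zero_left, smul_zero]
    exact finsum_zero

lemma L0_one_eq_zero (VA : GRVertexAlgebra V) :
    (∑ᶠ m : ℤ, (m:ℂ) • VA.proj m VA.one) = 0 := by
  have h : ∀ m : ℤ, (m:ℂ) • VA.proj m VA.one = 0 := by
    intro m
    by_cases hm : m = 0
    · subst hm; simp
    · rw [proj_homog_ne VA VA.one_homogeneous hm, smul_zero]
  simp only [h]
  exact finsum_zero

lemma L0_homog (VA : GRVertexAlgebra V) {w : ℤ} {u : V} (h : VA.proj w u = u) :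
    (∑ᶠ m : ℤ, (m:ℂ) • VA.proj m u) = (w:ℂ) • u := by
  rw [finsum_eq_single _ w (fun m hm => by rw [proj_homog_ne VA h hm, smul_zero]), h]

lemma proj_of_L0_eq (VA : GRVertexAlgebra V) (w : ℤ) (a : V)
    (h : (∑ᶠ m : ℤ, (m:ℂ) • VA.proj m a) = (w:ℂ) • a) : VA.proj w a = a := by
  have hz : ∀ k : ℤ, k ≠ w → VA.proj k a = 0 := by
    intro k hk
    have hsupp : (Function.support fun m : ℤ => (m:ℂ) • VA.proj m a).Finite :=
      (VA.proj_support_finite a).subset (by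
        intro m hm
        simp only [Function.mem_support] at hm ⊢
        exact fun h0 => hm (by rw [h0, smul_zero]))
    have h2 := congrArg (VA.proj k) h
    have hmap : (VA.proj k) (∑ᶠ m : ℤ, (m:ℂ) • VA.proj m a)
        = ∑ᶠ m : ℤ, (VA.proj k) ((m:ℂ) • VA.proj m a) := by
      have := (VA.proj k).toAddMonoidHom.map_finsum hsupp
      simpa using this
    rw [hmap] at h2
    simp only [map_smul] at h2
    have h3 : ∀ m : ℤ, m ≠ k → (m:ℂ) • VA.proj k (VA.proj m a) = 0 := by
      intro m hm
      rw [VA.proj_idem, if_neg (fun hkm => hm hkm.symm), smul_zero]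
    rw [finsum_eq_single _ k h3, VA.proj_idem, if_pos rfl] at h2
    have h4 : ((k:ℂ) - w) • VA.proj k a = 0 := by
      rw [sub_smul, h2, sub_self]
    have h5 : ((k:ℂ) - (w:ℂ)) ≠ 0 := sub_ne_zero.mpr (by exact_mod_cast hk)
    exact (smul_eq_zero.mp h4).resolve_left h5
  have := VA.proj_sum a
  rw [finsum_eq_single _ w (fun k hk => hz k hk)] at this
  exact this

lemma Lneg1_homog (VA : GRVertexAlgebra V) {w : ℤ} {u : V} (h : VA.proj w u = u) :
    VA.proj (w+1) (VA.Lneg1op u) = VA.Lneg1op u := by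
  apply proj_of_L0_eq
  have hb := VA.L0_bracket u VA.one (-2)
  rw [L0_one_eq_zero VA, VA.mode_zero_right, sub_zero, L0_homog VA h,
    VA.mode_smul_left] at hb
  unfold GRVertexAlgebra.Lneg1op
  rw [hb]
  push_cast
  module

end ZhuOAux

section ZhuOAux2

variable {V : Type} [AddCommGroup V] [Module ℂ V]

/-- Integration by parts: `Res x^N (1+x)^{l+w+1} Y(L(-1)u,x)v
  = -N Res x^{N-1} (1+x)^{l+w} Y(u,x)v + (-N - (w+l+1)) Res x^N (1+x)^{l+w} Y(u,x)v`. -/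
lemma resPow_deriv_identity (VA : GRVertexAlgebra V) {w : ℤ} {u : V} (h : VA.proj w u = u)
    (N l : ℤ) (v : V) :
    VA.resPow N l (VA.Lneg1op u) v
      = (-(N:ℂ)) • VA.resPow (N-1) l u v
        + (-(N:ℂ) - ((w:ℂ) + (l:ℂ) + 1)) • VA.resPow N l u v := by
  have hu' : VA.proj (w+1) (VA.Lneg1op u) = VA.Lneg1op u := Lneg1_homog VA h
  obtain ⟨N₀, hN₀⟩ := VA.lower_trunc u v
  set K : ℕ := (N₀ - N + 1).toNat with hK
  set g : ℕ → V := fun i => VA.mode u (N - 1 + i) v with hgdef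
  have hg : ∀ i : ℕ, K ≤ i → g i = 0 := by
    intro i hi
    apply hN₀
    have h1 := Int.self_le_toNat (N₀ - N + 1)
    omega
  rw [resPow_homog VA hu' N l v, resPow_homog VA h (N-1) l v, resPow_homog VA h N l v]
  have hL : (∑ᶠ i : ℕ, cchoose (l + (w+1)) i • VA.mode (VA.Lneg1op u) (N + i) v)
      = ∑ i ∈ Finset.range (K+1), cchoose ((l+w)+1) i • ((-(N:ℂ) - i) • g i) := by
    have hterm : ∀ i : ℕ, cchoose (l + (w+1)) i • VA.mode (VA.Lneg1op u) (N + i) v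
        = cchoose ((l+w)+1) i • ((-(N:ℂ) - i) • g i) := by
      intro i
      have hd : VA.mode (VA.Lneg1op u) (N + i) v
          = (-(((N + (i:ℤ)):ℤ)):ℂ) • VA.mode u (N + i - 1) v := VA.Lneg1_deriv u v (N + i)
      have hidx : N + (i:ℤ) - 1 = N - 1 + i := by ring
      have harg : l + (w+1) = (l+w)+1 := by ring
      rw [harg, hd, hidx]
      congr 1
      · congr 1
        push_cast
        ring
    simp only [hterm]
    apply finsum_eq_sum_range
    intro i hi
    rw [hg i (by omega), smul_zero, smul_zero]
  have hR1 : (∑ᶠ i : ℕ, cchoose (l + w) i • VA.mode u (N - 1 + i) v)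
      = ∑ i ∈ Finset.range (K+1), cchoose (l+w) i • g i := by
    apply finsum_eq_sum_range
    intro i hi
    show cchoose (l+w) i • g i = 0
    rw [hg i (by omega), smul_zero]
  have hR2 : (∑ᶠ i : ℕ, cchoose (l + w) i • VA.mode u (N + i) v)
      = ∑ i ∈ Finset.range (K+1),
          (fun j => match j with
            | 0 => (0:V)
            | (j+1) => cchoose (l+w) j • g (j+1)) i := by
    have hterm : ∀ i : ℕ, cchoose (l + w) i • VA.mode u (N + i) v
        = cchoose (l+w) i • g (i+1) := by
      intro i
      have hidx : N + (i:ℤ) = N - 1 + ((i:ℕ)+1 : ℕ) := by push_cast; ring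
      rw [hidx]
    simp only [hterm]
    rw [Finset.sum_range_succ']
    simp only [add_zero]
    rw [finsum_eq_sum_range _ K]
    intro i hi
    rw [hg (i+1) (by omega), smul_zero]
  rw [hL, hR1, hR2, Finset.smul_sum, Finset.smul_sum, ← Finset.sum_add_distrib]
  apply Finset.sum_congr rfl
  intro i _
  match i with
  | 0 => simp [cchoose_zero']
  | (j+1) =>
    simp only []
    rw [smul_smul, smul_smul, smul_smul, ← add_smul]
    congr 1
    have hp := cchoose_pascal (l+w) j
    have ha := cchoose_absorb (l+w) j
    push_cast at ha ⊢
    linear_combination (-(N:ℂ) - ((j:ℂ)+1)) * hp - ha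

lemma resPow_deep_mem (VA : GRVertexAlgebra V) (l : ℕ) (s : ℕ) :
    ∀ (u : V) (w : ℤ), VA.proj w u = u → ∀ v : V,
      VA.resPow (-(2 * (l:ℤ)) - 2 - (s:ℤ)) l u v ∈ VA.ZhuO l := by
  induction s with
  | zero =>
    intro u w hw v
    have hidx : (-(2*(l:ℤ)) - 2 - ((0:ℕ):ℤ)) = -(2*(l:ℤ)) - 2 := by push_cast; ring
    rw [hidx]
    apply Submodule.subset_span
    left
    exact ⟨u, v, ⟨w, hw⟩, rfl⟩
  | succ s ih =>
    intro u w hw v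
    have hu' : VA.proj (w+1) (VA.Lneg1op u) = VA.Lneg1op u := Lneg1_homog VA hw
    have hid := resPow_deriv_identity VA hw (-(2*(l:ℤ)) - 2 - (s:ℤ)) l v
    set N : ℤ := -(2*(l:ℤ)) - 2 - (s:ℤ) with hN
    have hNz : N ≠ 0 := by omega
    have hNe : (-(N:ℂ)) ≠ 0 := by
      simpa using (Int.cast_ne_zero (α := ℂ)).mpr hNz
    have hmem1 := ih (VA.Lneg1op u) (w+1) hu' v
    have hmem2 := ih u w hw v
    have hstep : VA.resPow (N-1) l u v
        = (-(N:ℂ))⁻¹ • (VA.resPow N l (VA.Lneg1op u) v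
            - (-(N:ℂ) - ((w:ℂ) + (((l:ℤ)):ℂ) + 1)) • VA.resPow N l u v) := by
      rw [hid, add_sub_cancel_right, smul_smul, inv_mul_cancel₀ hNe, one_smul]
    have hidx : (-(2*(l:ℤ)) - 2 - ((s+1:ℕ):ℤ)) = N - 1 := by push_cast; omega
    rw [hidx, hstep]
    exact Submodule.smul_mem _ _
      (Submodule.sub_mem _ hmem1 (Submodule.smul_mem _ _ hmem2))

lemma resPow_split (VA : GRVertexAlgebra V) {w : ℤ} {u : V} (h : VA.proj w u = u)
    (N l : ℤ) (v : V) :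
    VA.resPow N (l+1) u v = VA.resPow N l u v + VA.resPow (N+1) l u v := by
  obtain ⟨N₀, hN₀⟩ := VA.lower_trunc u v
  set K : ℕ := (N₀ - N).toNat with hK
  set g : ℕ → V := fun i => VA.mode u (N + i) v with hgdef
  have hg : ∀ i : ℕ, K ≤ i → g i = 0 := by
    intro i hi
    apply hN₀
    have h1 := Int.self_le_toNat (N₀ - N)
    omega
  rw [resPow_homog VA h N (l+1) v, resPow_homog VA h N l v, resPow_homog VA h (N+1) l v]
  have hL : (∑ᶠ i : ℕ, cchoose ((l+1) + w) i • VA.mode u (N + i) v)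
      = ∑ i ∈ Finset.range (K+1), cchoose ((l+w)+1) i • g i := by
    have harg : (l+1) + w = (l+w)+1 := by ring
    rw [harg]
    apply finsum_eq_sum_range
    intro i hi
    show cchoose ((l+w)+1) i • g i = 0
    rw [hg i (by omega), smul_zero]
  have hR1 : (∑ᶠ i : ℕ, cchoose (l + w) i • VA.mode u (N + i) v)
      = ∑ i ∈ Finset.range (K+1), cchoose (l+w) i • g i := by
    apply finsum_eq_sum_range
    intro i hi
    show cchoose (l+w) i • g i = 0
    rw [hg i (by omega), smul_zero]
  have hR2 : (∑ᶠ i : ℕ, cchoose (l + w) i • VA.mode u ((N+1) + i) v)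
      = ∑ i ∈ Finset.range (K+1),
          (fun j => match j with
            | 0 => (0:V)
            | (j+1) => cchoose (l+w) j • g (j+1)) i := by
    have hterm : ∀ i : ℕ, cchoose (l + w) i • VA.mode u ((N+1) + i) v
        = cchoose (l+w) i • g (i+1) := by
      intro i
      have hidx : (N+1) + (i:ℤ) = N + ((i:ℕ)+1 : ℕ) := by push_cast; ring
      rw [hidx]
    simp only [hterm]
    rw [Finset.sum_range_succ']
    simp only [add_zero]
    rw [finsum_eq_sum_range _ K]
    intro i hi
    rw [hg (i+1) (by omega), smul_zero]
  rw [hL, hR1, hR2, ← Finset.sum_add_distrib]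
  apply Finset.sum_congr rfl
  intro i _
  match i with
  | 0 => simp [cchoose_zero']
  | (j+1) =>
    simp only []
    rw [cchoose_pascal (l+w) j, add_smul]

end ZhuOAux2
/-- Let `V` be a vertex operator algebra and `n > 0`.  Then `O_n(V) ⊆ O_{n-1}(V)`. -/
theorem ZhuO_antitone {V : Type} [AddCommGroup V] [Module ℂ V]
    (VA : VertexOperatorAlgebra V) (n : ℕ) (hn : 0 < n) :
    VA.ZhuO n ≤ VA.ZhuO (n - 1) := by
  obtain ⟨l, rfl⟩ : ∃ l : ℕ, n = l + 1 := ⟨n - 1, by omega⟩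
  have hsub : (l + 1) - 1 = l := rfl
  rw [hsub]
  apply Submodule.span_le.mpr
  rintro x (⟨u, v, ⟨w, hw⟩, rfl⟩ | ⟨v, rfl⟩)
  · unfold GRVertexAlgebra.circN
    have hcast : (((l+1:ℕ)):ℤ) = (l:ℤ) + 1 := by push_cast; ring
    rw [hcast, resPow_split VA.toGRVertexAlgebra hw]
    have h1 : (-(2*((l:ℤ)+1)) - 2) = -(2*(l:ℤ)) - 2 - ((2:ℕ):ℤ) := by push_cast; ring
    have h2 : (-(2*((l:ℤ)+1)) - 2 + 1) = -(2*(l:ℤ)) - 2 - ((1:ℕ):ℤ) := by push_cast; ring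
    exact Submodule.add_mem _
      (by rw [h1]; exact resPow_deep_mem VA.toGRVertexAlgebra l 2 u w hw v)
      (by rw [h2]; exact resPow_deep_mem VA.toGRVertexAlgebra l 1 u w hw v)
  · exact Submodule.subset_span (Or.inr ⟨v, rfl⟩)
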